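/- Let n ≥ 1, γ ∈ (0,1), α ∈ ℝ, p > 0 and β ∈ ℝ, and set ᾱ = n−2γ−α and β̄ = 2n/p − β. For a measurable function u : ℝⁿ∖{0} → ℝ define ū(x) = u(x/|x|²). Then, as identities in [0,∞]: ∫_{ℝⁿ}∫_{ℝⁿ} (ū(x)−ū(y))² |x−y|^{−n−2γ}|x|^{−ᾱ}|y|^{−ᾱ} dx dy = ∫_{ℝⁿ}∫_{ℝⁿ} (u(x)−u(y))² |x−y|^{−n−2γ}|x|^{−α}|y|^{−α} dx dy and ∫_{ℝⁿ} |ū(x)|^{p} |x|^{−β̄ p} dx = ∫_{ℝⁿ} |u(x)|^{p} |x|^{−β p} dx. Consequently, if there is Λ > 0 such that Λ( ∫ |u|^p |x|^{−βp} dx )^{2/p} ≤ ∫∫ (u(x)−u(y))² |x−y|^{−n−2γ}|x|^{−α}|y|^{−α} dy dx for all u ∈ C_c^∞(ℝⁿ∖{0}), then the same inequality with the same Λ holds with (α,β) replaced by (ᾱ,β̄) for all u ∈ C_c^∞(ℝⁿ∖{0}). -/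

import Mathlib

open MeasureTheory Real
open scoped ENNReal

/-- The weighted Gagliardo energy `∫∫ (u(x)-u(y))² |x-y|^{-n-2γ} |x|^{-a}|y|^{-a} dx dy`
as an element of `[0,∞]`. -/
noncomputable def kelvinEnergy (n : ℕ) (γ a : ℝ)
    (u : EuclideanSpace ℝ (Fin n) → ℝ) : ℝ≥0∞ :=
  ∫⁻ x : EuclideanSpace ℝ (Fin n), ∫⁻ y : EuclideanSpace ℝ (Fin n),
    ENNReal.ofReal ((u x - u y) ^ 2 *
      (‖x - y‖ ^ (-((n : ℝ) + 2 * γ)) * (‖x‖ ^ (-a) * ‖y‖ ^ (-a))))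

/-- The weighted mass `∫ |u(x)|^p |x|^{-cp} dx` as an element of `[0,∞]`. -/
noncomputable def kelvinMass (n : ℕ) (c p : ℝ)
    (u : EuclideanSpace ℝ (Fin n) → ℝ) : ℝ≥0∞ :=
  ∫⁻ x : EuclideanSpace ℝ (Fin n), ENNReal.ofReal (|u x| ^ p * ‖x‖ ^ (-(c * p)))

/-- The inversion `ū(x) = u(x/|x|²)`. -/
noncomputable def kelvinInv (n : ℕ) (u : EuclideanSpace ℝ (Fin n) → ℝ) :
    EuclideanSpace ℝ (Fin n) → ℝ :=
  fun x => u ((‖x‖ ^ 2)⁻¹ • x)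

open EuclideanGeometry Module

variable {n : ℕ}

lemma iota_eq_inversion (x : EuclideanSpace ℝ (Fin n)) :
    inversion (0 : EuclideanSpace ℝ (Fin n)) 1 x = (‖x‖ ^ 2)⁻¹ • x := by
  simp [inversion_def, dist_eq_norm, one_div, div_eq_mul_inv]

lemma norm_iota (x : EuclideanSpace ℝ (Fin n)) (hx : x ≠ 0) :
    ‖(‖x‖ ^ 2)⁻¹ • x‖ = ‖x‖⁻¹ := by
  have hnx : (0:ℝ) < ‖x‖ := norm_pos_iff.2 hx
  rw [norm_smul, Real.norm_eq_abs, abs_inv, abs_pow, abs_norm]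
  field_simp

lemma dist_iota (x y : EuclideanSpace ℝ (Fin n)) (hx : x ≠ 0) (hy : y ≠ 0) :
    ‖(‖x‖ ^ 2)⁻¹ • x - (‖y‖ ^ 2)⁻¹ • y‖ = ‖x - y‖ * (‖x‖⁻¹ * ‖y‖⁻¹) := by
  have := dist_inversion_inversion (c := (0 : EuclideanSpace ℝ (Fin n))) hx hy 1
  simp only [iota_eq_inversion, dist_eq_norm, sub_zero] at this
  rw [this]
  ring

lemma iota_iota (x : EuclideanSpace ℝ (Fin n)) :
    (‖(‖x‖ ^ 2)⁻¹ • x‖ ^ 2)⁻¹ • ((‖x‖ ^ 2)⁻¹ • x) = x := by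
  rcases eq_or_ne x 0 with rfl | hx
  · simp
  · have h := inversion_inversion (0 : EuclideanSpace ℝ (Fin n)) one_ne_zero x
    rwa [iota_eq_inversion, iota_eq_inversion] at h

lemma kernel_id (n : ℕ) (γ α ᾱ : ℝ) (hᾱ : ᾱ = n - 2 * γ - α)
    (A B C : ℝ) (hA : 0 < A) (hB : 0 < B) (hC : 0 ≤ C) :
    A ^ (-(2 * n : ℝ)) * (B ^ (-(2 * n : ℝ)) *
      ((C * (A⁻¹ * B⁻¹)) ^ (-((n : ℝ) + 2 * γ)) * (A⁻¹ ^ (-α) * B⁻¹ ^ (-α))))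
      = C ^ (-((n : ℝ) + 2 * γ)) * (A ^ (-ᾱ) * B ^ (-ᾱ)) := by
  have h1 : (C * (A⁻¹ * B⁻¹)) ^ (-((n : ℝ) + 2 * γ))
      = C ^ (-((n : ℝ) + 2 * γ)) * (A ^ ((n : ℝ) + 2 * γ) * B ^ ((n : ℝ) + 2 * γ)) := by
    rw [Real.mul_rpow hC (by positivity), Real.mul_rpow (by positivity) (by positivity),
      Real.inv_rpow hA.le, Real.inv_rpow hB.le, ← Real.rpow_neg hA.le, ← Real.rpow_neg hB.le,
      neg_neg]
  have h2 : (A⁻¹ : ℝ) ^ (-α) = A ^ α := by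
    rw [Real.inv_rpow hA.le, ← Real.rpow_neg hA.le, neg_neg]
  have h3 : (B⁻¹ : ℝ) ^ (-α) = B ^ α := by
    rw [Real.inv_rpow hB.le, ← Real.rpow_neg hB.le, neg_neg]
  rw [h1, h2, h3]
  have hA1 : A ^ (-(2 * n : ℝ)) * A ^ ((n : ℝ) + 2 * γ) * A ^ α = A ^ (-ᾱ) := by
    rw [← Real.rpow_add hA, ← Real.rpow_add hA, hᾱ]; ring_nf
  have hB1 : B ^ (-(2 * n : ℝ)) * B ^ ((n : ℝ) + 2 * γ) * B ^ α = B ^ (-ᾱ) := by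
    rw [← Real.rpow_add hB, ← Real.rpow_add hB, hᾱ]; ring_nf
  calc A ^ (-(2 * n : ℝ)) * (B ^ (-(2 * n : ℝ)) *
      ((C ^ (-((n : ℝ) + 2 * γ)) * (A ^ ((n : ℝ) + 2 * γ) * B ^ ((n : ℝ) + 2 * γ))) *
        (A ^ α * B ^ α)))
      = C ^ (-((n : ℝ) + 2 * γ)) * ((A ^ (-(2 * n : ℝ)) * A ^ ((n : ℝ) + 2 * γ) * A ^ α) *
        (B ^ (-(2 * n : ℝ)) * B ^ ((n : ℝ) + 2 * γ) * B ^ α)) := by ring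
    _ = _ := by rw [hA1, hB1]

lemma kelvin_cov (n : ℕ) (hn : 1 ≤ n) (g : EuclideanSpace ℝ (Fin n) → ℝ≥0∞) :
    ∫⁻ x : EuclideanSpace ℝ (Fin n), ENNReal.ofReal (‖x‖ ^ (-(2 * n : ℝ))) * g ((‖x‖ ^ 2)⁻¹ • x)
      = ∫⁻ x, g x := by
  haveI : Nonempty (Fin n) := Fin.pos_iff_nonempty.mp hn
  set s : Set (EuclideanSpace ℝ (Fin n)) := {0}ᶜ with hsdef
  have hs : MeasurableSet s := (measurableSet_singleton 0).compl
  have h0 : (volume : Measure (EuclideanSpace ℝ (Fin n))) {0} = 0 := measure_singleton 0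
  have hrestrict : (volume : Measure (EuclideanSpace ℝ (Fin n))).restrict s = volume := by
    rw [Measure.restrict_congr_set (ae_eq_univ.2 (by simp [hsdef])), Measure.restrict_univ]
  have hder : ∀ x ∈ s, HasFDerivWithinAt (inversion (0 : EuclideanSpace ℝ (Fin n)) 1)
      (((1 : ℝ) / dist x 0) ^ 2 • ((ℝ ∙ (x - 0))ᗮ.reflection :
        EuclideanSpace ℝ (Fin n) →L[ℝ] EuclideanSpace ℝ (Fin n))) s x :=
    fun x hx => (hasFDerivAt_inversion hx).hasFDerivWithinAt
  have hinj : Set.InjOn (inversion (0 : EuclideanSpace ℝ (Fin n)) 1) s :=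
    (inversion_injective 0 one_ne_zero).injOn
  have himg : inversion (0 : EuclideanSpace ℝ (Fin n)) 1 '' s = s := by
    ext y
    constructor
    · rintro ⟨x, hx, rfl⟩
      simpa [hsdef] using
        (inversion_eq_center (c := (0 : EuclideanSpace ℝ (Fin n))) (x := x) one_ne_zero).not.2 hx
    · intro hy
      exact ⟨inversion 0 1 y,
        by simpa [hsdef] using
          (inversion_eq_center (c := (0 : EuclideanSpace ℝ (Fin n))) one_ne_zero).not.2 hy,
        inversion_inversion 0 one_ne_zero y⟩
  have key := lintegral_image_eq_lintegral_abs_det_fderiv_mul volume hs hder hinj g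
  rw [himg, hrestrict] at key
  rw [key]
  apply lintegral_congr_ae
  filter_upwards [compl_mem_ae_iff.2 h0] with x hx
  have hx0 : x ≠ 0 := hx
  have hnx : (0:ℝ) < ‖x‖ := norm_pos_iff.2 hx0
  have hinv : inversion (0 : EuclideanSpace ℝ (Fin n)) 1 x = (‖x‖ ^ 2)⁻¹ • x :=
    iota_eq_inversion x
  have hdet : |(((1 : ℝ) / dist x 0) ^ 2 • ((ℝ ∙ (x - 0))ᗮ.reflection :
      EuclideanSpace ℝ (Fin n) →L[ℝ] EuclideanSpace ℝ (Fin n))).det|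
      = ‖x‖ ^ (-(2 * n : ℝ)) := by
    have h1 : (((1 : ℝ) / dist x 0) ^ 2 • ((ℝ ∙ (x - 0))ᗮ.reflection :
        EuclideanSpace ℝ (Fin n) →L[ℝ] EuclideanSpace ℝ (Fin n))).det
        = (((1 : ℝ) / ‖x‖) ^ 2) ^ (finrank ℝ (EuclideanSpace ℝ (Fin n))) *
          LinearMap.det ((ℝ ∙ (x - 0))ᗮ.reflection).toLinearMap := by
      rw [ContinuousLinearMap.det, ContinuousLinearMap.coe_smul, LinearMap.det_smul,
        dist_zero_right]
      rfl
    rw [h1, Submodule.det_reflection]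
    have h2 : ((ℝ ∙ (x - 0))ᗮ)ᗮ = ℝ ∙ x := by
      rw [sub_zero, Submodule.orthogonal_orthogonal]
    rw [h2, finrank_span_singleton hx0, finrank_euclideanSpace_fin]
    rw [abs_mul, abs_pow, abs_pow, pow_one, abs_neg, abs_one, mul_one]
    rw [abs_div, abs_one, abs_norm]
    rw [Real.rpow_neg hnx.le,
      show (2 * n : ℝ) = ((2 * n : ℕ) : ℝ) by push_cast; ring, Real.rpow_natCast]
    rw [div_pow, one_pow, ← inv_eq_one_div, ← inv_pow, ← pow_mul, inv_pow]
  rw [hinv, hdet]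

lemma kelvin_mass_eq (n : ℕ) (hn : 1 ≤ n) (p β β' : ℝ) (hp : 0 < p)
    (hβ' : β' = 2 * n / p - β) (u : EuclideanSpace ℝ (Fin n) → ℝ) :
    kelvinMass n β' p (kelvinInv n u) = kelvinMass n β p u := by
  haveI : Nonempty (Fin n) := Fin.pos_iff_nonempty.mp hn
  have hcov := kelvin_cov n hn (fun x => ENNReal.ofReal (|u x| ^ p * ‖x‖ ^ (-(β * p))))
  rw [kelvinMass, kelvinMass, ← hcov]
  apply lintegral_congr_ae
  filter_upwards [compl_mem_ae_iff.2
    (measure_singleton (0 : EuclideanSpace ℝ (Fin n)))] with x hx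
  have hx0 : x ≠ 0 := hx
  have hnx : (0:ℝ) < ‖x‖ := norm_pos_iff.2 hx0
  simp only [kelvinInv, norm_iota x hx0]
  rw [← ENNReal.ofReal_mul (by positivity)]
  congr 1
  have h2 : ‖x‖⁻¹ ^ (-(β * p)) = ‖x‖ ^ (β * p) := by
    rw [Real.inv_rpow hnx.le, ← Real.rpow_neg hnx.le, neg_neg]
  have h3 : ‖x‖ ^ (-(2 * n : ℝ)) * ‖x‖ ^ (β * p) = ‖x‖ ^ (-(β' * p)) := by
    rw [← Real.rpow_add hnx]
    congr 1
    rw [hβ']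
    field_simp
    ring
  rw [h2, ← h3]
  ring

lemma kelvin_energy_eq (n : ℕ) (hn : 1 ≤ n) (γ α ᾱ : ℝ) (hᾱ : ᾱ = n - 2 * γ - α)
    (u : EuclideanSpace ℝ (Fin n) → ℝ) :
    kelvinEnergy n γ ᾱ (kelvinInv n u) = kelvinEnergy n γ α u := by
  haveI : Nonempty (Fin n) := Fin.pos_iff_nonempty.mp hn
  symm
  rw [kelvinEnergy, kelvinEnergy]
  set P : EuclideanSpace ℝ (Fin n) → EuclideanSpace ℝ (Fin n) → ℝ≥0∞ := fun x y =>
    ENNReal.ofReal ((u x - u y) ^ 2 *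
      (‖x - y‖ ^ (-((n : ℝ) + 2 * γ)) * (‖x‖ ^ (-α) * ‖y‖ ^ (-α)))) with hP
  calc (∫⁻ x : EuclideanSpace ℝ (Fin n), ∫⁻ y, P x y)
      = ∫⁻ x : EuclideanSpace ℝ (Fin n), ENNReal.ofReal (‖x‖ ^ (-(2 * n : ℝ))) *
          ∫⁻ y, P ((‖x‖ ^ 2)⁻¹ • x) y :=
        (kelvin_cov n hn (fun x => ∫⁻ y, P x y)).symm
    _ = ∫⁻ x : EuclideanSpace ℝ (Fin n), ENNReal.ofReal (‖x‖ ^ (-(2 * n : ℝ))) *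
          ∫⁻ y, ENNReal.ofReal (‖y‖ ^ (-(2 * n : ℝ))) * P ((‖x‖ ^ 2)⁻¹ • x) ((‖y‖ ^ 2)⁻¹ • y) :=
        lintegral_congr fun x => by
          rw [kelvin_cov n hn (fun y => P ((‖x‖ ^ 2)⁻¹ • x) y)]
    _ = ∫⁻ x : EuclideanSpace ℝ (Fin n), ∫⁻ y, ENNReal.ofReal (‖x‖ ^ (-(2 * n : ℝ))) *
          (ENNReal.ofReal (‖y‖ ^ (-(2 * n : ℝ))) * P ((‖x‖ ^ 2)⁻¹ • x) ((‖y‖ ^ 2)⁻¹ • y)) :=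
        lintegral_congr fun x =>
          (lintegral_const_mul' _ _ ENNReal.ofReal_ne_top).symm
    _ = ∫⁻ x : EuclideanSpace ℝ (Fin n), ∫⁻ y,
          ENNReal.ofReal ((kelvinInv n u x - kelvinInv n u y) ^ 2 *
            (‖x - y‖ ^ (-((n : ℝ) + 2 * γ)) * (‖x‖ ^ (-ᾱ) * ‖y‖ ^ (-ᾱ)))) := by
        apply lintegral_congr_ae
        filter_upwards [compl_mem_ae_iff.2
          (measure_singleton (0 : EuclideanSpace ℝ (Fin n)))] with x hx
        apply lintegral_congr_ae
        filter_upwards [compl_mem_ae_iff.2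
          (measure_singleton (0 : EuclideanSpace ℝ (Fin n)))] with y hy
        have hx0 : x ≠ 0 := hx
        have hy0 : y ≠ 0 := hy
        have hnx : (0:ℝ) < ‖x‖ := norm_pos_iff.2 hx0
        have hny : (0:ℝ) < ‖y‖ := norm_pos_iff.2 hy0
        simp only [hP, kelvinInv, norm_iota x hx0, norm_iota y hy0, dist_iota x y hx0 hy0]
        rw [← ENNReal.ofReal_mul (by positivity), ← ENNReal.ofReal_mul (by positivity)]
        congr 1
        have hk := kernel_id n γ α ᾱ hᾱ ‖x‖ ‖y‖ ‖x - y‖ hnx hny (norm_nonneg _)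
        linear_combination ((u ((‖x‖ ^ 2)⁻¹ • x) - u ((‖y‖ ^ 2)⁻¹ • y)) ^ 2) * hk

lemma kelvinInv_invinv (n : ℕ) (u : EuclideanSpace ℝ (Fin n) → ℝ) :
    kelvinInv n (kelvinInv n u) = u := by
  funext x
  simp only [kelvinInv, iota_iota]

lemma kelvinInv_props (n : ℕ) (u : EuclideanSpace ℝ (Fin n) → ℝ)
    (hu : ContDiff ℝ (⊤ : ℕ∞) u) (hcs : HasCompactSupport u)
    (h0 : (0 : EuclideanSpace ℝ (Fin n)) ∉ tsupport u) :
    ContDiff ℝ (⊤ : ℕ∞) (kelvinInv n u) ∧ HasCompactSupport (kelvinInv n u) ∧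
      (0 : EuclideanSpace ℝ (Fin n)) ∉ tsupport (kelvinInv n u) := by
  obtain ⟨ε, hε, hball⟩ := Metric.isOpen_iff.1 (isClosed_tsupport u).isOpen_compl 0 h0
  obtain ⟨R, hR⟩ := hcs.isBounded.subset_closedBall 0
  set R' : ℝ := max R 1 with hR'
  have hR'pos : (0:ℝ) < R' := lt_of_lt_of_le one_pos (le_max_right _ _)
  set S : Set (EuclideanSpace ℝ (Fin n)) :=
    (Metric.ball 0 R'⁻¹)ᶜ ∩ Metric.closedBall 0 ε⁻¹ with hS
  have hsupp : Function.support (kelvinInv n u) ⊆ S := by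
    intro x hxs
    have hus : u ((‖x‖ ^ 2)⁻¹ • x) ≠ 0 := hxs
    have hmem : (‖x‖ ^ 2)⁻¹ • x ∈ tsupport u := subset_tsupport u hus
    have hx0 : x ≠ 0 := by
      rintro rfl
      exact h0 (by simpa using hmem)
    have hnx : (0:ℝ) < ‖x‖ := norm_pos_iff.2 hx0
    have hlow : ε ≤ ‖x‖⁻¹ := by
      by_contra hlt
      push_neg at hlt
      have : (‖x‖ ^ 2)⁻¹ • x ∈ Metric.ball (0 : EuclideanSpace ℝ (Fin n)) ε := by
        rw [Metric.mem_ball, dist_zero_right, norm_iota x hx0]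
        exact hlt
      exact hball this hmem
    have hhigh : ‖x‖⁻¹ ≤ R' := by
      have := hR hmem
      rw [Metric.mem_closedBall, dist_zero_right, norm_iota x hx0] at this
      exact this.trans (le_max_left _ _)
    constructor
    · rw [Set.mem_compl_iff, Metric.mem_ball, dist_zero_right]
      push_neg
      rw [← inv_inv ‖x‖]
      exact inv_anti₀ (inv_pos.2 hnx) hhigh
    · rw [Metric.mem_closedBall, dist_zero_right, ← inv_inv ‖x‖]
      exact inv_anti₀ hε hlow
  have hScl : IsClosed S := (Metric.isOpen_ball.isClosed_compl).inter Metric.isClosed_closedBall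
  have hts : tsupport (kelvinInv n u) ⊆ S := closure_minimal hsupp hScl
  have hzero : ∀ x ∈ Metric.ball (0 : EuclideanSpace ℝ (Fin n)) R'⁻¹, kelvinInv n u x = 0 := by
    intro x hxb
    by_contra hne
    exact (hsupp hne).1 hxb
  refine ⟨?_, ?_, ?_⟩
  · rw [contDiff_iff_contDiffAt]
    intro a
    by_cases ha : a ∈ Metric.ball (0 : EuclideanSpace ℝ (Fin n)) R'⁻¹
    · exact contDiffAt_const.congr_of_eventuallyEq
        (Filter.eventually_of_mem (Metric.isOpen_ball.mem_nhds ha) hzero)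
    · have ha0 : a ≠ 0 := by
        rintro rfl
        exact ha (by simpa [Metric.mem_ball] using inv_pos.2 hR'pos)
      have h1 : ContDiffAt ℝ (⊤ : ℕ∞) (fun x => inversion (0 : EuclideanSpace ℝ (Fin n)) 1 x) a :=
        ContDiffAt.inversion contDiffAt_const contDiffAt_const contDiffAt_id ha0
      have h2 : ContDiffAt ℝ (⊤ : ℕ∞)
          (fun x => u (inversion (0 : EuclideanSpace ℝ (Fin n)) 1 x)) a :=
        hu.contDiffAt.comp a h1
      apply h2.congr_of_eventuallyEq
      filter_upwards [isOpen_compl_singleton.mem_nhds ha0] with x hx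
      rw [kelvinInv, iota_eq_inversion]
  · apply HasCompactSupport.of_support_subset_isCompact
      (isCompact_closedBall (0 : EuclideanSpace ℝ (Fin n)) ε⁻¹)
    exact hsupp.trans Set.inter_subset_right
  · intro h
    exact (hts h).1 (by simpa [Metric.mem_ball] using inv_pos.2 hR'pos)

/-- Kelvin-transform invariance of the fractional Caffarelli–Kohn–Nirenberg energy and
weighted `L^p` norm in `ℝⁿ`: with `ū(x) = u(x/|x|²)`, `ᾱ = n-2γ-α`, `β̄ = 2n/p - β`,
the weighted energies and norms coincide (as identities in `[0,∞]`), and hence the CKN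
inequality transfers from `(α,β)` to `(ᾱ,β̄)` with the same constant, for all
smooth `u` compactly supported away from the origin. -/
theorem stmt_17 (n : ℕ) (hn : 1 ≤ n) (γ α p β ᾱ β' : ℝ)
    (hγ : γ ∈ Set.Ioo (0 : ℝ) 1) (hp : 0 < p)
    (hᾱ : ᾱ = n - 2 * γ - α) (hβ' : β' = 2 * n / p - β) :
    (∀ u : EuclideanSpace ℝ (Fin n) → ℝ, Measurable u →
      kelvinEnergy n γ ᾱ (kelvinInv n u) = kelvinEnergy n γ α u ∧
      kelvinMass n β' p (kelvinInv n u) = kelvinMass n β p u) ∧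
    (∀ Λ : ℝ, 0 < Λ →
      (∀ u : EuclideanSpace ℝ (Fin n) → ℝ, ContDiff ℝ (⊤ : ℕ∞) u →
        HasCompactSupport u → (0 : EuclideanSpace ℝ (Fin n)) ∉ tsupport u →
        ENNReal.ofReal Λ * (kelvinMass n β p u) ^ (2 / p) ≤ kelvinEnergy n γ α u) →
      (∀ u : EuclideanSpace ℝ (Fin n) → ℝ, ContDiff ℝ (⊤ : ℕ∞) u →
        HasCompactSupport u → (0 : EuclideanSpace ℝ (Fin n)) ∉ tsupport u →
        ENNReal.ofReal Λ * (kelvinMass n β' p u) ^ (2 / p) ≤ kelvinEnergy n γ ᾱ u)) := by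
  constructor
  · intro u _
    exact ⟨kelvin_energy_eq n hn γ α ᾱ hᾱ u, kelvin_mass_eq n hn p β β' hp hβ' u⟩
  · intro Λ _ H u hu hcs h0
    obtain ⟨hv1, hv2, hv3⟩ := kelvinInv_props n u hu hcs h0
    have e1 : kelvinEnergy n γ ᾱ u = kelvinEnergy n γ α (kelvinInv n u) := by
      conv_lhs => rw [← kelvinInv_invinv n u]
      exact kelvin_energy_eq n hn γ α ᾱ hᾱ (kelvinInv n u)
    have e2 : kelvinMass n β' p u = kelvinMass n β p (kelvinInv n u) := by
      conv_lhs => rw [← kelvinInv_invinv n u]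
      exact kelvin_mass_eq n hn p β β' hp hβ' (kelvinInv n u)
    rw [e1, e2]
    exact H (kelvinInv n u) hv1 hv2 hv3
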